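/- arXiv:2604.15252 — 2 statements merged into one kernel-verified Lean document; each statement's English description precedes it below -/
import Mathlib

section
/- Let P ≻ 0 be a symmetric positive definite n×n matrix, A an n×n matrix, and β > 0 such that A P Aᵀ − P + β I ⪯ 0. Then with λ := β / λ_max(P) ∈ (0, 1], one has Aᵀ P⁻¹ A − P⁻¹ ⪯ −λ P⁻¹. -/
open Matrix

section Aux

variable {n : ℕ}

private lemma dot_self_nonneg (v : Fin n → ℝ) : 0 ≤ v ⬝ᵥ v :=
  Finset.sum_nonneg fun i _ => mul_self_nonneg _

/-- build a real PosSemidef from symmetry + quadratic form -/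
private lemma psd_of_quadform {M : Matrix (Fin n) (Fin n) ℝ} (hM : M.IsHermitian)
    (h : ∀ x : Fin n → ℝ, 0 ≤ x ⬝ᵥ M *ᵥ x) : M.PosSemidef :=
  .of_dotProduct_mulVec_nonneg hM fun x => by rw [star_trivial]; exact h x

private lemma psd_quadform {M : Matrix (Fin n) (Fin n) ℝ} (h : M.PosSemidef)
    (x : Fin n → ℝ) : 0 ≤ x ⬝ᵥ M *ᵥ x := by
  have := h.dotProduct_mulVec_nonneg x; rwa [star_trivial] at this

private lemma psd_smul {M : Matrix (Fin n) (Fin n) ℝ} (h : M.PosSemidef) {c : ℝ}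
    (hc : 0 ≤ c) : (c • M).PosSemidef := by
  refine psd_of_quadform ?_ fun x => ?_
  · unfold Matrix.IsHermitian
    rw [conjTranspose_smul, h.1]
    simp
  · rw [smul_mulVec, dotProduct_smul, smul_eq_mul]
    exact mul_nonneg hc (psd_quadform h x)

/-- key lemma : `BBᵀ ⪯ c I → BᵀB ⪯ c I` -/
private lemma psd_transpose_swap (B : Matrix (Fin n) (Fin n) ℝ) (c : ℝ) (hc : 0 ≤ c)
    (h : (c • (1 : Matrix (Fin n) (Fin n) ℝ) - B * Bᵀ).PosSemidef) :
    (c • (1 : Matrix (Fin n) (Fin n) ℝ) - Bᵀ * B).PosSemidef := by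
  have hq : ∀ y : Fin n → ℝ, (Bᵀ *ᵥ y) ⬝ᵥ (Bᵀ *ᵥ y) ≤ c * (y ⬝ᵥ y) := by
    intro y
    have h0 := psd_quadform h y
    rw [sub_mulVec, dotProduct_sub, smul_mulVec, one_mulVec, dotProduct_smul,
      smul_eq_mul, ← mulVec_mulVec, dotProduct_mulVec y B, ← mulVec_transpose] at h0
    linarith
  have hherm : (c • (1 : Matrix (Fin n) (Fin n) ℝ) - Bᵀ * B).IsHermitian := by
    have h1 : Bᵀ = Bᴴ := (conjTranspose_eq_transpose_of_trivial B).symm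
    have h2 : (Bᴴ * B).IsHermitian := isHermitian_conjTranspose_mul_self B
    have h3 : ((c • (1 : Matrix (Fin n) (Fin n) ℝ))).IsHermitian := by
      unfold Matrix.IsHermitian
      rw [conjTranspose_smul, conjTranspose_one]
      simp
    rw [h1]
    exact h3.sub h2
  refine psd_of_quadform hherm fun x => ?_
  rw [sub_mulVec, dotProduct_sub, smul_mulVec, one_mulVec, dotProduct_smul, smul_eq_mul,
    ← mulVec_mulVec, dotProduct_mulVec x Bᵀ, vecMul_transpose]
  set u := B *ᵥ x with hu
  set w := Bᵀ *ᵥ u with hw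
  have hb : w ⬝ᵥ w ≤ c * (u ⬝ᵥ u) := hq u
  have hxw : u ⬝ᵥ u = x ⬝ᵥ w := by
    rw [hw, dotProduct_mulVec x Bᵀ, vecMul_transpose, ← hu]
  have hcs : (x ⬝ᵥ w) ^ 2 ≤ (x ⬝ᵥ x) * (w ⬝ᵥ w) := by
    simpa [dotProduct, sq] using Finset.sum_mul_sq_le_sq_mul_sq Finset.univ x w
  have ha : 0 ≤ u ⬝ᵥ u := dot_self_nonneg u
  have hs : 0 ≤ x ⬝ᵥ x := dot_self_nonneg x
  have hw2 : 0 ≤ w ⬝ᵥ w := dot_self_nonneg w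
  rcases eq_or_lt_of_le ha with h0 | hpos
  · have : 0 ≤ c * (x ⬝ᵥ x) := mul_nonneg hc hs
    linarith
  · have h1 : (u ⬝ᵥ u) ^ 2 ≤ (x ⬝ᵥ x) * (c * (u ⬝ᵥ u)) := by
      calc (u ⬝ᵥ u) ^ 2 = (x ⬝ᵥ w) ^ 2 := by rw [hxw]
        _ ≤ (x ⬝ᵥ x) * (w ⬝ᵥ w) := hcs
        _ ≤ (x ⬝ᵥ x) * (c * (u ⬝ᵥ u)) := by
            exact mul_le_mul_of_nonneg_left hb hs
    nlinarith
  
/-- upper eigenvalue bound gives `M ⪯ c I` -/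
private lemma smul_one_sub_psd {M : Matrix (Fin n) (Fin n) ℝ} (hM : M.IsHermitian) (c : ℝ)
    (hc : ∀ i, hM.eigenvalues i ≤ c) :
    (c • (1 : Matrix (Fin n) (Fin n) ℝ) - M).PosSemidef := by
  set U : Matrix (Fin n) (Fin n) ℝ := (hM.eigenvectorUnitary : Matrix (Fin n) (Fin n) ℝ) with hUdef
  have hU : U * star U = 1 := (Matrix.mem_unitaryGroup_iff).mp hM.eigenvectorUnitary.2
  have hdiagpsd :
      ((c • (1 : Matrix (Fin n) (Fin n) ℝ)) -
        diagonal (RCLike.ofReal ∘ hM.eigenvalues)).PosSemidef := by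
    rw [smul_one_eq_diagonal, diagonal_sub]
    refine PosSemidef.diagonal ?_
    intro i
    have := hc i
    simp only [Pi.sub_apply, Pi.zero_apply, Function.comp_apply, RCLike.ofReal_real_eq_id, id_eq]
    linarith
  have hkey :
      c • (1 : Matrix (Fin n) (Fin n) ℝ) - M =
        U * ((c • (1 : Matrix (Fin n) (Fin n) ℝ)) -
          diagonal (RCLike.ofReal ∘ hM.eigenvalues)) * star U := by
    conv_rhs => rw [Matrix.mul_sub, Matrix.sub_mul]
    congr 1
    · rw [Matrix.mul_smul, Matrix.smul_mul, Matrix.mul_one, hU]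
    · exact hM.spectral_theorem
  rw [hkey]
  have := hdiagpsd.mul_mul_conjTranspose_same U
  rwa [Matrix.star_eq_conjTranspose]

end Aux

/-- dual-to-primal Lyapunov inequality. If `A P Aᵀ − P + β I ⪯ 0`
with `P ≻ 0`, `β > 0`, then with `λ = β / λ_max(P)` one has `λ ∈ (0,1]` and
`Aᵀ P⁻¹ A − P⁻¹ ⪯ −λ P⁻¹`. -/
theorem dual_to_primal_lyapunov
    {n : ℕ} (hn : 0 < n)
    (P A : Matrix (Fin n) (Fin n) ℝ)
    (hP : P.PosDef) (β : ℝ) (hβ : 0 < β)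
    (hLyap : (-(A * P * Aᵀ - P + β • (1 : Matrix (Fin n) (Fin n) ℝ))).PosSemidef)
    (lam : ℝ) (hlam : lam = β / (⨆ i, hP.1.eigenvalues i)) :
    0 < lam ∧ lam ≤ 1 ∧
      ((-lam) • P⁻¹ - (Aᵀ * P⁻¹ * A - P⁻¹)).PosSemidef := by
  set lmax : ℝ := ⨆ i, hP.1.eigenvalues i with hlmax
  -- step 1 : rearrange the Lyapunov hypothesis
  have h1 : (P - A * P * Aᵀ - β • (1 : Matrix (Fin n) (Fin n) ℝ)).PosSemidef := by
    convert hLyap using 1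
    abel
  -- A P Aᵀ is PSD
  have hAPA : (A * P * Aᵀ).PosSemidef := by
    have := hP.posSemidef.mul_mul_conjTranspose_same A
    rwa [conjTranspose_eq_transpose_of_trivial] at this
  -- P - β I is PSD
  have hPβ : (P - β • (1 : Matrix (Fin n) (Fin n) ℝ)).PosSemidef := by
    have := h1.add hAPA
    convert this using 1
    abel
  -- every eigenvalue of P is ≥ β
  have heig : ∀ i, β ≤ hP.1.eigenvalues i := by
    intro i
    set w := hP.1.eigenvectorBasis i with hw
    set v : Fin n → ℝ := ⇑w with hv
    have hv1 : v ⬝ᵥ v = 1 := by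
      have hn1 : ‖w‖ = 1 := hP.1.eigenvectorBasis.orthonormal.1 i
      have h2 : (inner ℝ w w : ℝ) = 1 := by
        rw [real_inner_self_eq_norm_sq, hn1]; norm_num
      rw [PiLp.inner_apply] at h2
      simpa [dotProduct, hv, sq] using h2
    have hval : hP.1.eigenvalues i = v ⬝ᵥ P *ᵥ v := by
      have h3 := hP.1.eigenvalues_eq i
      simpa using h3
    have h2 := psd_quadform hPβ v
    rw [sub_mulVec, dotProduct_sub, smul_mulVec, one_mulVec, dotProduct_smul,
      smul_eq_mul, hv1, mul_one, ← hval] at h2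
    linarith
  have hlmax_ge : ∀ i, hP.1.eigenvalues i ≤ lmax := fun i =>
    le_ciSup (Set.Finite.bddAbove (Set.finite_range _)) i
  have hβlmax : β ≤ lmax := le_trans (heig ⟨0, hn⟩) (hlmax_ge ⟨0, hn⟩)
  have hlmaxpos : 0 < lmax := lt_of_lt_of_le hβ hβlmax
  have hlampos : 0 < lam := by rw [hlam]; exact div_pos hβ hlmaxpos
  have hlamle : lam ≤ 1 := by rw [hlam]; exact div_le_one_of_le₀ hβlmax hlmaxpos.le
  refine ⟨hlampos, hlamle, ?_⟩
  -- P ⪯ lmax I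
  have hPle : (lmax • (1 : Matrix (Fin n) (Fin n) ℝ) - P).PosSemidef :=
    smul_one_sub_psd hP.1 lmax hlmax_ge
  have hlamlmax : lam * lmax = β := by
    rw [hlam]; field_simp
  -- (1-lam) P - A P Aᵀ ⪰ 0
  have hstep : ((1 - lam) • P - A * P * Aᵀ).PosSemidef := by
    have hsm := psd_smul hPle hlampos.le
    have := h1.add hsm
    convert this using 1
    rw [smul_sub, smul_smul, hlamlmax, sub_smul, one_smul]
    abel
  -- square root machinery
  set S : Matrix (Fin n) (Fin n) ℝ := (open scoped MatrixOrder in CFC.sqrt P) with hSdef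
  have hSS : S * S = P := by open scoped MatrixOrder in exact CFC.sqrt_mul_sqrt_self P hP.posSemidef.nonneg
  have hT : Sᵀ = S := by
    have h : Sᴴ = S := by open scoped MatrixOrder in exact (CFC.sqrt_nonneg P).posSemidef.1
    rwa [conjTranspose_eq_transpose_of_trivial] at h
  have hdetS : IsUnit S.det := by
    have hdP : 0 < P.det := hP.det_pos
    rw [← hSS, det_mul] at hdP
    have : S.det ≠ 0 := fun h => by rw [h, mul_zero] at hdP; exact lt_irrefl _ hdP
    exact this.isUnit
  have hS1 : S⁻¹ * S = 1 := nonsing_inv_mul S hdetS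
  have hS2 : S * S⁻¹ = 1 := mul_nonsing_inv S hdetS
  have hTi : (S⁻¹)ᵀ = S⁻¹ := by rw [transpose_nonsing_inv, hT]
  have hPinv : S⁻¹ * S⁻¹ = P⁻¹ := by rw [← hSS, Matrix.mul_inv_rev]
  set B : Matrix (Fin n) (Fin n) ℝ := S⁻¹ * A * S with hBdef
  -- conjugation 1 : (1-lam) I - B Bᵀ ⪰ 0
  have hBBt : B * Bᵀ = S⁻¹ * (A * P * Aᵀ) * S⁻¹ := by
    rw [hBdef, transpose_mul, transpose_mul, hT, hTi, ← hSS]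
    simp only [Matrix.mul_assoc]
  have hSPS : S⁻¹ * P * S⁻¹ = 1 := by
    rw [← hSS, ← Matrix.mul_assoc, hS1, Matrix.one_mul, hS2]
  have hconj1 : ((1 - lam) • (1 : Matrix (Fin n) (Fin n) ℝ) - B * Bᵀ).PosSemidef := by
    have := hstep.mul_mul_conjTranspose_same S⁻¹
    rw [conjTranspose_eq_transpose_of_trivial, hTi] at this
    convert this using 1
    rw [Matrix.mul_sub, Matrix.sub_mul, Matrix.mul_smul, Matrix.smul_mul, hSPS, hBBt]
  -- swap : (1-lam) I - Bᵀ B ⪰ 0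
  have hconj2 : ((1 - lam) • (1 : Matrix (Fin n) (Fin n) ℝ) - Bᵀ * B).PosSemidef :=
    psd_transpose_swap B (1 - lam) (by linarith) hconj1
  -- conjugation 2 : back to P⁻¹
  have hBtB : S⁻¹ * (Bᵀ * B) * S⁻¹ = Aᵀ * P⁻¹ * A := by
    rw [hBdef, transpose_mul, transpose_mul, hT, hTi, ← hPinv]
    simp only [Matrix.mul_assoc]
    rw [show A * (S * S⁻¹) = A from by rw [hS2, Matrix.mul_one]]
    rw [← Matrix.mul_assoc S⁻¹ S, hS1, Matrix.one_mul]
  have hfinal := hconj2.mul_mul_conjTranspose_same S⁻¹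
  rw [conjTranspose_eq_transpose_of_trivial, hTi] at hfinal
  convert hfinal using 1
  rw [Matrix.mul_sub, Matrix.sub_mul, Matrix.mul_smul, Matrix.smul_mul, Matrix.mul_one, hPinv,
    hBtB, sub_smul, one_smul, neg_smul]
  abel
end

section
/- Suppose V : ℕ → ℝ≥0, s : ℕ → ℝ≥0 satisfy, for constants α₂ ≥ α₁ > 0, κ > 0, c ≥ 0: α₁ s(k)² ≤ V(k) + c, V(k) ≤ α₂ s(k)² + c, and V(k+1) − V(k) ≤ −κ s(k)² + c for all k. Then s(k)² ≤ (1/α₁)·[ρᵏ (α₂ s(0)² + c) + (c' )/(1 − ρ) + c ] for all k, where ρ := max{0, 1 − κ/α₂} < 1 and c' := c(1 + κ/α₂). In particular, limsup_{k→∞} s(k)² ≤ (1/α₁)·( c'/(1−ρ) + c ). -/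
open Filter

/-- practical ISS from a practical ISS-Lyapunov function. -/
theorem practical_iss_from_lyapunov
    (V s : ℕ → ℝ) (α₁ α₂ κ c : ℝ)
    (hα₁ : 0 < α₁) (hα₁₂ : α₁ ≤ α₂) (hκ : 0 < κ) (hc : 0 ≤ c)
    (hVnonneg : ∀ k, 0 ≤ V k) (hsnonneg : ∀ k, 0 ≤ s k)
    (hlow : ∀ k, α₁ * s k ^ 2 ≤ V k + c)
    (hup : ∀ k, V k ≤ α₂ * s k ^ 2 + c)
    (hdec : ∀ k, V (k + 1) - V k ≤ -κ * s k ^ 2 + c)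
    (ρ c' : ℝ) (hρ : ρ = max 0 (1 - κ / α₂)) (hc' : c' = c * (1 + κ / α₂)) :
    ρ < 1 ∧
    (∀ k, s k ^ 2 ≤ (1 / α₁) * (ρ ^ k * (α₂ * s 0 ^ 2 + c) + c' / (1 - ρ) + c)) ∧
    Filter.limsup (fun k => s k ^ 2) Filter.atTop ≤ (1 / α₁) * (c' / (1 - ρ) + c) := by
  have hα₂ : 0 < α₂ := lt_of_lt_of_le hα₁ hα₁₂
  have ha : 0 < κ / α₂ := div_pos hκ hα₂
  have hρ0 : 0 ≤ ρ := hρ ▸ le_max_left _ _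
  have hρ1 : ρ < 1 := by
    rw [hρ]; exact max_lt one_pos (by linarith)
  have hρa : 1 - κ / α₂ ≤ ρ := hρ ▸ le_max_right _ _
  have hc'0 : 0 ≤ c' := by
    rw [hc']; positivity
  have h1ρ : 0 < 1 - ρ := by linarith
  -- one-step contraction
  have hstep : ∀ k, V (k + 1) ≤ ρ * V k + c' := by
    intro k
    have h1 := hdec k
    have h2 := hup k
    have h3 : (κ / α₂) * V k ≤ κ * s k ^ 2 + (κ / α₂) * c := by
      have := mul_le_mul_of_nonneg_left h2 (le_of_lt ha)
      calc (κ / α₂) * V k ≤ (κ / α₂) * (α₂ * s k ^ 2 + c) := this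
        _ = κ * s k ^ 2 + (κ / α₂) * c := by field_simp
    have h4 : V (k + 1) ≤ (1 - κ / α₂) * V k + c' := by
      rw [hc']; nlinarith
    calc V (k + 1) ≤ (1 - κ / α₂) * V k + c' := h4
      _ ≤ ρ * V k + c' := by
          have := mul_le_mul_of_nonneg_right hρa (hVnonneg k); linarith
  -- induction bound
  have hV : ∀ k, V k ≤ ρ ^ k * V 0 + c' / (1 - ρ) := by
    intro k
    induction k with
    | zero => simp; positivity
    | succ n ih =>
      calc V (n + 1) ≤ ρ * V n + c' := hstep n
        _ ≤ ρ * (ρ ^ n * V 0 + c' / (1 - ρ)) + c' := by nlinarith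
        _ = ρ ^ (n + 1) * V 0 + (ρ * (c' / (1 - ρ)) + c') := by ring
        _ = ρ ^ (n + 1) * V 0 + c' / (1 - ρ) := by
            congr 1; field_simp; ring
  have hbound : ∀ k, s k ^ 2 ≤ (1 / α₁) * (ρ ^ k * (α₂ * s 0 ^ 2 + c) + c' / (1 - ρ) + c) := by
    intro k
    have h1 := hlow k
    have h2 := hV k
    have h3 : V 0 ≤ α₂ * s 0 ^ 2 + c := hup 0
    have hρk : (0:ℝ) ≤ ρ ^ k := pow_nonneg hρ0 k
    have : α₁ * s k ^ 2 ≤ ρ ^ k * (α₂ * s 0 ^ 2 + c) + c' / (1 - ρ) + c := by nlinarith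
    rw [div_mul_eq_mul_div, one_mul, le_div_iff₀ hα₁]
    linarith [mul_comm α₁ (s k ^ 2)]
  refine ⟨hρ1, hbound, ?_⟩
  -- limsup bound
  have htend : Tendsto (fun k => (1 / α₁) * (ρ ^ k * (α₂ * s 0 ^ 2 + c) + c' / (1 - ρ) + c))
      atTop (nhds ((1 / α₁) * (0 * (α₂ * s 0 ^ 2 + c) + c' / (1 - ρ) + c))) := by
    apply Tendsto.const_mul
    apply Tendsto.add_const
    apply Tendsto.add_const
    exact (tendsto_pow_atTop_nhds_zero_of_lt_one hρ0 hρ1).mul_const _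
  have heq : (1 / α₁) * (0 * (α₂ * s 0 ^ 2 + c) + c' / (1 - ρ) + c)
      = (1 / α₁) * (c' / (1 - ρ) + c) := by ring
  rw [heq] at htend
  have := Filter.limsup_le_limsup (f := atTop)
    (u := fun k => s k ^ 2)
    (v := fun k => (1 / α₁) * (ρ ^ k * (α₂ * s 0 ^ 2 + c) + c' / (1 - ρ) + c))
    (Eventually.of_forall hbound)
    (IsCoboundedUnder.of_frequently_ge (Frequently.of_forall (fun k => sq_nonneg (s k))))
    htend.isBoundedUnder_le
  calc Filter.limsup (fun k => s k ^ 2) atTop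
      ≤ Filter.limsup (fun k => (1 / α₁) * (ρ ^ k * (α₂ * s 0 ^ 2 + c) + c' / (1 - ρ) + c)) atTop := this
    _ = (1 / α₁) * (c' / (1 - ρ) + c) := htend.limsup_eq
end
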